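/- arXiv:2007.06715 — 3 statements merged into one kernel-verified Lean document; each statement's English description precedes it below -/
import Mathlib

section
/- If |β| ≤ 1, then x = 1/2 is the unique fixed point of f_β(x) = 1/(1 + exp(−2β(2x−1))) in [0,1]. -/
noncomputable def f (β x : ℝ) : ℝ := 1 / (1 + Real.exp (-2*β*(2*x-1)))

/-!
`f β` is the logistic sigmoid `σ(4β(x - 1/2))`. Since `σ' = σ(1 - σ) = 1/4 - (σ - 1/2)²` is
`< 1/4` away from `0`, the mean value theorem gives `|σ y - 1/2| < |y|/4` for `y ≠ 0`; hence a
fixed point `x ≠ 1/2` would satisfy `|x - 1/2| < |β| |x - 1/2| ≤ |x - 1/2|`.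
-/

open Real

lemma sigmoid_mul_one_sub_sigmoid_lt {y : ℝ} (hy : y ≠ 0) : sigmoid y * (1 - sigmoid y) < 4⁻¹ := by
  have hne : sigmoid y - 2⁻¹ ≠ 0 := sub_ne_zero.2 (sigmoid_zero ▸ sigmoid_injective.ne hy)
  nlinarith [sq_pos_of_ne_zero hne]

lemma sigmoid_sub_half_lt {y : ℝ} (hy : 0 < y) : sigmoid y - 2⁻¹ < y / 4 := by
  obtain ⟨c, hc, hslope⟩ := exists_hasDerivAt_eq_slope sigmoid (fun c => sigmoid c * (1 - sigmoid c))
    hy continuous_sigmoid.continuousOn fun c _ => hasDerivAt_sigmoid c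
  have hderiv := sigmoid_mul_one_sub_sigmoid_lt hc.1.ne'
  rw [hslope, sigmoid_zero, sub_zero, div_lt_iff₀ hy] at hderiv
  linarith

lemma abs_sigmoid_sub_half_lt {y : ℝ} (hy : y ≠ 0) : |sigmoid y - 2⁻¹| < |y| / 4 := by
  rcases hy.lt_or_gt with hneg | hpos
  · have hlt := sigmoid_sub_half_lt (neg_pos.2 hneg)
    have hsign : sigmoid y < 2⁻¹ := sigmoid_zero ▸ sigmoid_lt hneg
    rw [sigmoid_neg] at hlt
    rw [abs_of_neg (sub_neg.2 hsign), abs_of_neg hneg]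
    linarith
  · have hsign : 2⁻¹ < sigmoid y := sigmoid_zero ▸ sigmoid_lt hpos
    rw [abs_of_pos (sub_pos.2 hsign), abs_of_pos hpos]
    exact sigmoid_sub_half_lt hpos

lemma sigmoid_mul_sub_half_eq_self_iff {k x : ℝ} (hk : |k| ≤ 4) :
    sigmoid (k * (x - 2⁻¹)) = x ↔ x = 2⁻¹ := by
  refine ⟨fun hfix => ?_, fun hx => by simp [hx]⟩
  by_contra hx
  have hy : k * (x - 2⁻¹) ≠ 0 := fun hy => hx (by rw [← hfix, hy, sigmoid_zero])
  have hlt := abs_sigmoid_sub_half_lt hy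
  rw [hfix, abs_mul] at hlt
  have hpos : 0 < |x - 2⁻¹| := abs_pos.2 (sub_ne_zero.2 hx)
  have hslope : |k| * |x - 2⁻¹| ≤ 4 * |x - 2⁻¹| := mul_le_mul_of_nonneg_right hk hpos.le
  linarith

lemma f_eq_sigmoid (β x : ℝ) : f β x = sigmoid (4 * β * (x - 2⁻¹)) := by
  rw [f, sigmoid_def, one_div]
  ring_nf

theorem stmt5 (β : ℝ) (hβ : |β| ≤ 1) :
    ∀ x ∈ Set.Icc (0:ℝ) 1, (f β x = x ↔ x = 1/2) := by
  intro x _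
  have hk : |4 * β| ≤ 4 := by rw [abs_mul, abs_of_pos four_pos]; linarith
  rw [f_eq_sigmoid, sigmoid_mul_sub_half_eq_self_iff hk, one_div]
end

section
/- If β > 1 and c ∈ (1/2, 1) is a fixed point of f_β(x) = 1/(1 + exp(−2β(2x−1))), then 0 < f_β'(c) < 1; consequently c is an attracting hyperbolic fixed point. -/
lemma cubic_le_exp {x : ℝ} (hx : 0 ≤ x) : 1 + x + x^2/2 + x^3/6 ≤ Real.exp x := by
  have h := Real.sum_le_exp_of_nonneg hx 4
  have hsum : ∑ i ∈ Finset.range 4, x ^ i / (Nat.factorial i : ℝ)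
      = 1 + x + x^2/2 + x^3/6 := by
    simp [Finset.sum_range_succ, Nat.factorial]
  rw [hsum] at h
  exact h

theorem stmt7 (β c : ℝ) (hβ : 1 < β) (hc : c ∈ Set.Ioo (1/2:ℝ) 1) (hfix : f β c = c) :
    0 < deriv (f β) c ∧ deriv (f β) c < 1 := by
  obtain ⟨hc1, hc2⟩ := hc
  have hc0 : 0 < c := by linarith
  set e := Real.exp (-2*β*(2*c-1)) with he
  have hepos : 0 < e := Real.exp_pos _
  have hden : (0:ℝ) < 1 + e := by linarith
  have hfix' : 1 / (1 + e) = c := hfix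
  have h1c : 0 < 1 - c := by linarith
  have heval : e = (1 - c)/c := by
    field_simp at hfix'
    field_simp
    linarith
  -- compute derivative
  have h1 : HasDerivAt (fun x : ℝ => -2*β*(2*x-1)) (-4*β) c := by
    have h : HasDerivAt (fun x : ℝ => -4*β*x + 2*β) (-4*β) c := by
      simpa using ((hasDerivAt_id c).const_mul (-4*β)).add_const (2*β)
    have hfe : (fun x : ℝ => -2*β*(2*x-1)) = fun x : ℝ => -4*β*x + 2*β := by
      funext x; ring
    rw [hfe]
    exact h
  have h2 : HasDerivAt (fun x : ℝ => 1 + Real.exp (-2*β*(2*x-1))) (e * (-4*β)) c :=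
    (h1.exp).const_add 1
  have h3 : HasDerivAt (f β) (-(e * (-4*β)) / (1+e)^2) c := by
    have h := h2.inv (ne_of_gt hden)
    have hf : f β = fun x => (1 + Real.exp (-2*β*(2*x-1)))⁻¹ := by
      funext x; simp [f, one_div]
    rw [hf]
    exact h
  have hderiv : deriv (f β) c = 4*β*c*(1-c) := by
    rw [h3.deriv, heval]
    field_simp
    ring
  rw [hderiv]
  constructor
  · have h4β : (0:ℝ) < 4*β := by linarith
    have := mul_pos (mul_pos h4β hc0) h1c
    linarith
  · set t := 2*c - 1 with ht
    clear_value t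
    have ht0 : 0 < t := by rw [ht]; linarith
    have ht1 : t < 1 := by rw [ht]; linarith
    have hexp : Real.exp (2*β*t) = c/(1-c) := by
      have h' : Real.exp (2*β*t) = e⁻¹ := by
        rw [he, ← Real.exp_neg]; ring_nf
      rw [h', heval]
      field_simp
    have hx : (0:ℝ) ≤ 2*β*t := by nlinarith
    have hkey := cubic_le_exp hx
    rw [hexp] at hkey
    have hmul : (1 + 2*β*t + (2*β*t)^2/2 + (2*β*t)^3/6) * (1-c) ≤ c :=
      (le_div_iff₀ h1c).mp hkey
    have hc_t : c = (1+t)/2 := by rw [ht]; ring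
    have hβt : 0 < β*t := by nlinarith
    have hB : 0 < t^2*(β*(β-1))*(1-t) :=
      mul_pos (mul_pos (pow_pos ht0 2) (by nlinarith)) (by linarith)
    have hC : 0 < β^3*t^3*(1-t) :=
      mul_pos (mul_pos (pow_pos (by linarith : (0:ℝ) < β) 3) (pow_pos ht0 3)) (by linarith)
    rw [hc_t] at hmul
    have hmt : (1 + 2*β*t + 2*β^2*t^2 + (4/3)*β^3*t^3) * (1-t) ≤ 1+t := by nlinarith [hmul]
    have hq : β*(1-t^2) < 1 := by nlinarith [hmt, hB, hC, ht0]
    have hfin : 4*β*c*(1-c) = β*(1-t^2) := by rw [hc_t]; ring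
    linarith
end

section
/- If β < −1 and c₀ ∈ (0, 1/2), c₁ = 1 − c₀ are the nontrivial fixed points of f_{−β} (equivalently of the second iterate f_β ∘ f_β), then {c₀, c₁} is a 2-cycle of f_β: f_β(c₀) = c₁ and f_β(c₁) = c₀. -/
lemma f_add (β x : ℝ) : f β x + f (-β) x = 1 := by
  unfold f
  have h : -2*(-β)*(2*x-1) = -(-2*β*(2*x-1)) := by ring
  rw [h, Real.exp_neg]
  have ht := (Real.exp_pos (-2*β*(2*x-1)))
  have h1 : (1 : ℝ) + Real.exp (-2*β*(2*x-1)) > 0 := by linarith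
  have h2 : (1 : ℝ) + (Real.exp (-2*β*(2*x-1)))⁻¹ > 0 := by positivity
  field_simp
  ring

theorem stmt10 (β c₀ c₁ : ℝ) (hβ : β < -1)
    (hc₀ : c₀ ∈ Set.Ioo (0:ℝ) (1/2)) (hc₁ : c₁ = 1 - c₀)
    (hfix₀ : f (-β) c₀ = c₀) (hfix₁ : f (-β) c₁ = c₁) :
    f β c₀ = c₁ ∧ f β c₁ = c₀ := by
  have h0 := f_add β c₀
  have h1 := f_add β c₁
  rw [hfix₀] at h0
  rw [hfix₁] at h1
  constructor <;> linarith
end
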